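/- Let A ⊆ ℕ × ∂B be a finite set with s ≥ 1 for every (s,y) ∈ A, and let σ be a permutation of A. If σ(s,y) ∈ S(s,y) for every (s,y) ∈ A, then σ is the identity permutation. -/

import Mathlib

open Finset

/-- The `i`-th standard unit vector `e_i` in `ℤ^(d+1)`. -/
def unitVec (d : ℕ) (i : Fin (d + 1)) : Fin (d + 1) → ℤ := Pi.single i 1

/-- The ℓ¹-norm `‖v‖₁ = ∑ i, |v i|` on `ℤ^(d+1)`. -/
def norm1 {d : ℕ} (v : Fin (d + 1) → ℤ) : ℤ := ∑ i, |v i|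

/-- `P t x z` represents the `t`-step transition probability `P(Z^x_t = z)` of a
time-homogeneous Markov chain on `ℤ^(d+1)` which at each step moves by `± e_i`,
with all `2(d+1)` one-step probabilities strictly positive and summing to `1`. -/
structure IsRandomWalk (d : ℕ)
    (P : ℕ → (Fin (d + 1) → ℤ) → (Fin (d + 1) → ℤ) → ℝ) : Prop where
  nonneg : ∀ t x z, 0 ≤ P t x z
  init : ∀ x z, P 0 x z = if z = x then 1 else 0
  step : ∀ t x z, P (t + 1) x z =
      ∑ i, P 1 x (x + unitVec d i) * P t (x + unitVec d i) z
        + ∑ i, P 1 x (x - unitVec d i) * P t (x - unitVec d i) z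
  sum_one : ∀ x, (∑ i, P 1 x (x + unitVec d i)) + (∑ i, P 1 x (x - unitVec d i)) = 1
  pos_add : ∀ x i, 0 < P 1 x (x + unitVec d i)
  pos_sub : ∀ x i, 0 < P 1 x (x - unitVec d i)

/-- The expectation `E[h(Z^x_t)]` (the law of `Z^x_t` has finite support). -/
noncomputable def expect {d : ℕ} (P : ℕ → (Fin (d + 1) → ℤ) → (Fin (d + 1) → ℤ) → ℝ)
    (t : ℕ) (x : Fin (d + 1) → ℤ) (h : (Fin (d + 1) → ℤ) → ℝ) : ℝ :=
  ∑ᶠ z, h z * P t x z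

/-- The finite set `S(t,x) = {(s,y) ∈ ℕ × ∂B : 1 ≤ s ≤ t, ‖y − x‖₁ ≤ t − s,
and t − s − ‖y − x‖₁ is even}`. -/
noncomputable def Sset (d t : ℕ) (x : Fin (d + 1) → ℤ) : Finset (ℕ × (Fin (d + 1) → ℤ)) :=
  ((Finset.Icc 1 t) ×ˢ (Fintype.piFinset fun i => Finset.Icc (x i - t) (x i + t))).filter
    (fun p => p.2 (Fin.last d) = 0 ∧ norm1 (p.2 - x) ≤ (t : ℤ) - p.1 ∧
      Even ((t : ℤ) - p.1 - norm1 (p.2 - x)))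

/-- The matrix `W^+_{t,x}`, with entries `(W^+)_{(s,y),(u,z)} = P(Z^y_s = z + u e_d)`. -/
noncomputable def Wplus {d : ℕ} (P : ℕ → (Fin (d + 1) → ℤ) → (Fin (d + 1) → ℤ) → ℝ)
    (t : ℕ) (x : Fin (d + 1) → ℤ) :
    Matrix {p // p ∈ Sset d t x} {p // p ∈ Sset d t x} ℝ :=
  fun p q => P p.1.1 p.1.2 (q.1.2 + Pi.single (Fin.last d) (q.1.1 : ℤ))

/-- The matrix `W^-_{t,x}`, with entries `(W^-)_{(s,y),(u,z)} = P(Z^y_s = z - u e_d)`. -/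
noncomputable def Wminus {d : ℕ} (P : ℕ → (Fin (d + 1) → ℤ) → (Fin (d + 1) → ℤ) → ℝ)
    (t : ℕ) (x : Fin (d + 1) → ℤ) :
    Matrix {p // p ∈ Sset d t x} {p // p ∈ Sset d t x} ℝ :=
  fun p q => P p.1.1 p.1.2 (q.1.2 - Pi.single (Fin.last d) (q.1.1 : ℤ))

/-- `N_{t,x} = (W^-_{t,x})⁻¹ W^+_{t,x}`. -/
noncomputable def Nmat {d : ℕ} (P : ℕ → (Fin (d + 1) → ℤ) → (Fin (d + 1) → ℤ) → ℝ)
    (t : ℕ) (x : Fin (d + 1) → ℤ) :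
    Matrix {p // p ∈ Sset d t x} {p // p ∈ Sset d t x} ℝ :=
  (Wminus P t x)⁻¹ * Wplus P t x

/-- The extended transform `N f`, vanishing outside `{w : w_d < 0}`, defined at a point
`w = x − t e_d` (with `x ∈ ∂B`, `t ≥ 1`) as the `(t,x)`-component of `N_{t,x}` applied to
the vector `(f(z + u e_d))_{(u,z) ∈ S(t,x)}`.  (Note that `(t,x) ∈ S(t,x)` always holds
in this situation, so the guard below is satisfied exactly when `w_d < 0`.) -/
noncomputable def Ntrans {d : ℕ} (P : ℕ → (Fin (d + 1) → ℤ) → (Fin (d + 1) → ℤ) → ℝ)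
    (f : (Fin (d + 1) → ℤ) → ℝ) : (Fin (d + 1) → ℤ) → ℝ := fun w =>
  if hm : ((-(w (Fin.last d))).toNat, Function.update w (Fin.last d) 0) ∈
      Sset d (-(w (Fin.last d))).toNat (Function.update w (Fin.last d) 0) then
    (Nmat P (-(w (Fin.last d))).toNat (Function.update w (Fin.last d) 0)).mulVec
      (fun p => f (p.1.2 + Pi.single (Fin.last d) (p.1.1 : ℤ)))
      ⟨((-(w (Fin.last d))).toNat, Function.update w (Fin.last d) 0), hm⟩
  else 0

/-! A permutation cannot strictly decrease any value of `f` while never increasing one, since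
it preserves `∑ f`. Membership in `S(t,x)` forces the time coordinate not to exceed `t`, so `σ`
preserves times; with equal times the ℓ¹-constraint leaves only the point `(t,x)` itself. -/

theorem Equiv.Perm.apply_eq_of_forall_le {α M : Type*} [Fintype α] [AddCommMonoid M]
    [PartialOrder M] [IsOrderedCancelAddMonoid M] (σ : Equiv.Perm α) (f : α → M)
    (hf : ∀ a, f (σ a) ≤ f a) (a : α) : f (σ a) = f a :=
  (sum_eq_sum_iff_of_le fun a _ => hf a).mp (Equiv.sum_comp σ f) a (mem_univ a)

theorem norm1_nonneg {d : ℕ} (v : Fin (d + 1) → ℤ) : 0 ≤ norm1 v :=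
  sum_nonneg fun i _ => abs_nonneg (v i)

theorem norm1_eq_zero {d : ℕ} {v : Fin (d + 1) → ℤ} : norm1 v = 0 ↔ v = 0 := by
  rw [norm1, sum_eq_zero_iff_of_nonneg fun i _ => abs_nonneg (v i), funext_iff]
  simp

theorem fst_le_of_mem_Sset {d t : ℕ} {x : Fin (d + 1) → ℤ} {q : ℕ × (Fin (d + 1) → ℤ)}
    (hq : q ∈ Sset d t x) : q.1 ≤ t := by
  simp only [Sset, mem_filter, mem_product, mem_Icc] at hq
  exact hq.1.1.2

theorem eq_of_mem_Sset_of_fst_eq {d t : ℕ} {x : Fin (d + 1) → ℤ} {q : ℕ × (Fin (d + 1) → ℤ)}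
    (hq : q ∈ Sset d t x) (ht : q.1 = t) : q = (t, x) := by
  simp only [Sset, mem_filter] at hq
  have hnorm : norm1 (q.2 - x) = 0 := by
    have := hq.2.2.1
    rw [ht, sub_self] at this
    exact this.antisymm (norm1_nonneg _)
  exact Prod.ext ht (sub_eq_zero.mp (norm1_eq_zero.mp hnorm))

theorem stmt_4_general (d : ℕ) (A : Finset (ℕ × (Fin (d + 1) → ℤ)))
    (σ : Equiv.Perm {p // p ∈ A})
    (hσ : ∀ p : {p // p ∈ A}, (σ p).1 ∈ Sset d p.1.1 p.1.2) :
    σ = 1 := by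
  have htime : ∀ p, (σ p).1.1 = p.1.1 :=
    σ.apply_eq_of_forall_le (fun p => p.1.1) fun p => fst_le_of_mem_Sset (hσ p)
  ext p : 2
  exact eq_of_mem_Sset_of_fst_eq (hσ p) (htime p)

/-- if a permutation `σ` of a finite set `A ⊆ ℕ × ∂B` (with `s ≥ 1` on `A`)
satisfies `σ(s,y) ∈ S(s,y)` for all `(s,y) ∈ A`, then `σ` is the identity. -/
theorem stmt_4 (d : ℕ) (A : Finset (ℕ × (Fin (d + 1) → ℤ)))
    (hA : ∀ p ∈ A, 1 ≤ p.1 ∧ p.2 (Fin.last d) = 0)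
    (σ : Equiv.Perm {p // p ∈ A})
    (hσ : ∀ p : {p // p ∈ A}, (σ p).1 ∈ Sset d p.1.1 p.1.2) :
    σ = 1 :=
  stmt_4_general d A σ hσ
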